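/- Let 0 < α < 2 < n and define G⁺_α(x,y) = C_n |x-y|^{α-n} ∫₀^{4x_n y_n/|x-y|²} z^{α/2-1} (z+1)^{-n/2} dz for x, y ∈ ℝⁿ₊ with x ≠ y. Then for any x, y ∈ ℝⁿ₊ with x ≠ y and any z⁰ ∈ ℝⁿ (such that the Kelvin images remain in ℝⁿ₊), G⁺_α((x-z⁰)/|x-z⁰|², (y-z⁰)/|y-z⁰|²) / (|x-z⁰|^{n-α} |y-z⁰|^{n-α}) = G⁺_α(x-z⁰, y-z⁰). -/

import Mathlib

/-! The Kelvin map `a ↦ a / ‖a‖²` divides distances by `‖a‖ ‖b‖` and last coordinates by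
`‖a‖²`, so the upper limit `4 aₙ bₙ / ‖a - b‖²` of the integral in `G⁺_α` is invariant, and
only the prefactor `‖a - b‖ ^ (α - n)` changes, by the factor `‖a‖ ^ (n - α) ‖b‖ ^ (n - α)`. -/

noncomputable section

/-- The last coordinate of a point in `ℝⁿ`. -/
def lastCoord (n : ℕ) (x : EuclideanSpace ℝ (Fin n)) : ℝ :=
  if h : 0 < n then x ⟨n - 1, by omega⟩ else 0

/-- The upper half space `ℝⁿ₊ = {x : xₙ > 0}`. -/
def upperHalf (n : ℕ) : Set (EuclideanSpace ℝ (Fin n)) := {x | 0 < lastCoord n x}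

/-- The Green's function `G⁺_α` of `(-Δ)^{α/2}` on the half space,
with normalizing constant `Cn`. -/
def Galpha (n : ℕ) (Cn α : ℝ) (x y : EuclideanSpace ℝ (Fin n)) : ℝ :=
  Cn * ‖x - y‖ ^ (α - (n : ℝ)) *
    ∫ z in (0 : ℝ)..(4 * lastCoord n x * lastCoord n y / ‖x - y‖ ^ 2),
      z ^ (α / 2 - 1) * (z + 1) ^ (-(n : ℝ) / 2)

lemma lastCoord_smul (n : ℕ) (c : ℝ) (v : EuclideanSpace ℝ (Fin n)) :
    lastCoord n (c • v) = c * lastCoord n v := by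
  unfold lastCoord
  split <;> simp [PiLp.smul_apply]

lemma ne_zero_of_smul_mem_upperHalf {n : ℕ} {c : ℝ} {v : EuclideanSpace ℝ (Fin n)}
    (hv : c • v ∈ upperHalf n) : v ≠ 0 := by
  rintro rfl
  simp [upperHalf, lastCoord] at hv

lemma norm_inv_norm_sq_smul_sub {E : Type*} [NormedAddCommGroup E] [InnerProductSpace ℝ E]
    {a b : E} (ha : a ≠ 0) (hb : b ≠ 0) :
    ‖(‖a‖ ^ 2)⁻¹ • a - (‖b‖ ^ 2)⁻¹ • b‖ = ‖a - b‖ / (‖a‖ * ‖b‖) := by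
  have h := dist_div_norm_sq_smul ha hb 1
  simp only [one_div, inv_pow, one_pow, dist_eq_norm] at h
  rw [h]
  ring

lemma Galpha_inv_norm_sq_smul (n : ℕ) (Cn α : ℝ) {a b : EuclideanSpace ℝ (Fin n)}
    (ha : a ≠ 0) (hb : b ≠ 0) :
    Galpha n Cn α ((‖a‖ ^ 2)⁻¹ • a) ((‖b‖ ^ 2)⁻¹ • b) =
      ‖a‖ ^ ((n : ℝ) - α) * ‖b‖ ^ ((n : ℝ) - α) * Galpha n Cn α a b := by
  have hna : 0 < ‖a‖ := norm_pos_iff.mpr ha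
  have hnb : 0 < ‖b‖ := norm_pos_iff.mpr hb
  have upper_limit :
      4 * lastCoord n ((‖a‖ ^ 2)⁻¹ • a) * lastCoord n ((‖b‖ ^ 2)⁻¹ • b) /
          ‖(‖a‖ ^ 2)⁻¹ • a - (‖b‖ ^ 2)⁻¹ • b‖ ^ 2 =
        4 * lastCoord n a * lastCoord n b / ‖a - b‖ ^ 2 := by
    rw [norm_inv_norm_sq_smul_sub ha hb, lastCoord_smul, lastCoord_smul]
    field_simp
  have prefactor :
      ‖(‖a‖ ^ 2)⁻¹ • a - (‖b‖ ^ 2)⁻¹ • b‖ ^ (α - (n : ℝ)) =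
        ‖a‖ ^ ((n : ℝ) - α) * ‖b‖ ^ ((n : ℝ) - α) * ‖a - b‖ ^ (α - (n : ℝ)) := by
    rw [norm_inv_norm_sq_smul_sub ha hb, Real.div_rpow (norm_nonneg _) (by positivity),
      Real.mul_rpow hna.le hnb.le, show (n : ℝ) - α = -(α - n) by ring,
      Real.rpow_neg hna.le, Real.rpow_neg hnb.le]
    ring
  unfold Galpha
  rw [upper_limit, prefactor]
  ring

theorem Galpha_kelvin_invariance_general (n : ℕ) (Cn α : ℝ)
    (x y z0 : EuclideanSpace ℝ (Fin n))
    (hxk : (‖x - z0‖ ^ 2)⁻¹ • (x - z0) ∈ upperHalf n)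
    (hyk : (‖y - z0‖ ^ 2)⁻¹ • (y - z0) ∈ upperHalf n) :
    Galpha n Cn α ((‖x - z0‖ ^ 2)⁻¹ • (x - z0)) ((‖y - z0‖ ^ 2)⁻¹ • (y - z0)) /
        (‖x - z0‖ ^ ((n : ℝ) - α) * ‖y - z0‖ ^ ((n : ℝ) - α)) =
      Galpha n Cn α (x - z0) (y - z0) := by
  have ha := ne_zero_of_smul_mem_upperHalf hxk
  have hb := ne_zero_of_smul_mem_upperHalf hyk
  have hscale : ‖x - z0‖ ^ ((n : ℝ) - α) * ‖y - z0‖ ^ ((n : ℝ) - α) ≠ 0 := by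
    have := norm_pos_iff.mpr ha
    have := norm_pos_iff.mpr hb
    positivity
  rw [Galpha_inv_norm_sq_smul n Cn α ha hb, mul_div_cancel_left₀ _ hscale]

/-- Kelvin-transform invariance of the half-space Green's function of `(-Δ)^{α/2}`. -/
theorem Galpha_kelvin_invariance (n : ℕ) (hn : 3 ≤ n) (Cn α : ℝ)
    (hCn : 0 < Cn) (hα : 0 < α) (hα2 : α < 2)
    (x y z0 : EuclideanSpace ℝ (Fin n))
    (hx : x ∈ upperHalf n) (hy : y ∈ upperHalf n) (hxy : x ≠ y)
    (hxk : (‖x - z0‖ ^ 2)⁻¹ • (x - z0) ∈ upperHalf n)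
    (hyk : (‖y - z0‖ ^ 2)⁻¹ • (y - z0) ∈ upperHalf n) :
    Galpha n Cn α ((‖x - z0‖ ^ 2)⁻¹ • (x - z0)) ((‖y - z0‖ ^ 2)⁻¹ • (y - z0)) /
        (‖x - z0‖ ^ ((n : ℝ) - α) * ‖y - z0‖ ^ ((n : ℝ) - α)) =
      Galpha n Cn α (x - z0) (y - z0) :=
  Galpha_kelvin_invariance_general n Cn α x y z0 hxk hyk
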